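/- arXiv:2603.15229 — 2 statements merged into one kernel-verified Lean document; each statement's English description precedes it below -/
import Mathlib

section
/- Let T be a tree, let u be a vertex of T, and let T_1, …, T_d be the connected components of the induced subgraph of T on V(T) \ {u}. Let ν be the matching number of 𝒩(T), let M and N be two ν-matchings of 𝒩(T), and suppose N_T[u] ∈ M. If u ∉ V_N, then there exists an index i such that N_{T_i} = {F ∈ N : F ⊆ V(T_i)} contains a facet containing a neighbor of u, |N_{T_i}| = |M_{T_i}| + 1, and |N_{T_j}| = |M_{T_j}| for all j ≠ i, where M_{T_j} = {F ∈ M : F ⊆ V(T_j)}. -/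
open scoped Classical
open SimpleGraph Finset MvPolynomial

variable {V : Type*}

/-- The closed neighborhood `N_G[u]` of a vertex, as a finite set. -/
noncomputable def closedNbhd [Fintype V] (G : SimpleGraph V) (u : V) : Finset V :=
  insert u (G.neighborFinset u)

/-- `F` is a facet of the closed neighborhood complex `𝒩(G)`:
`F = N_G[u]` for some vertex `u`, and no closed neighborhood of another vertex is
contained in `N_G[u]`. -/
def IsNFacet [Fintype V] (G : SimpleGraph V) (F : Finset V) : Prop :=
  ∃ u : V, F = closedNbhd G u ∧
    ∀ v : V, v ≠ u → ¬ closedNbhd G v ⊆ closedNbhd G u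

/-- A `k`-matching of `𝒩(G)`: a set of `k` pairwise disjoint facets of `𝒩(G)`. -/
def IsNMatching [Fintype V] (G : SimpleGraph V) (k : ℕ) (M : Finset (Finset V)) : Prop :=
  M.card = k ∧ (∀ F ∈ M, IsNFacet G F) ∧
    ∀ F ∈ M, ∀ F' ∈ M, F ≠ F' → Disjoint F F'

/-- The vertex set (inside `V`) of the connected component `c` of the induced subgraph
of `G` on `V \ {u}`. -/
def compVerts [Fintype V] (G : SimpleGraph V) (u : V)
    (c : (SimpleGraph.induce {v : V | v ≠ u} G).ConnectedComponent) : Set V :=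
  {v : V | ∃ h : v ≠ u, (SimpleGraph.induce {v : V | v ≠ u} G).connectedComponentMk ⟨v, h⟩ = c}

/-- For a matching `M` and a set `W` of vertices, the subcollection
`M_W = {F ∈ M : F ⊆ W}`. -/
noncomputable def matchPart (M : Finset (Finset V)) (W : Set V) : Finset (Finset V) :=
  M.filter (fun F => ∀ v ∈ F, v ∈ W)

lemma mem_closedNbhd' [Fintype V] (G : SimpleGraph V) {u v : V} :
    v ∈ closedNbhd G u ↔ v = u ∨ G.Adj u v := by
  simp [closedNbhd]

lemma closedNbhd_nonempty [Fintype V] (G : SimpleGraph V) (u : V) :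
    (closedNbhd G u).Nonempty := ⟨u, Finset.mem_insert_self _ _⟩

lemma notMem_compVerts [Fintype V] (G : SimpleGraph V) (u : V)
    (c : (SimpleGraph.induce {v : V | v ≠ u} G).ConnectedComponent) :
    u ∉ compVerts G u c := fun ⟨h, _⟩ => h rfl

lemma compVerts_unique [Fintype V] (G : SimpleGraph V) {u v : V}
    {c c' : (SimpleGraph.induce {v : V | v ≠ u} G).ConnectedComponent}
    (h : v ∈ compVerts G u c) (h' : v ∈ compVerts G u c') : c = c' := by
  obtain ⟨h1, h2⟩ := h
  obtain ⟨h1', h2'⟩ := h'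
  rw [← h2, ← h2']

lemma facet_subset_compVerts [Fintype V] (G : SimpleGraph V) {u w : V}
    (hu : u ∉ closedNbhd G w) :
    ∃ c, ∀ v ∈ closedNbhd G w, v ∈ compVerts G u c := by
  have hw : w ≠ u := by rintro rfl; exact hu (Finset.mem_insert_self _ _)
  refine ⟨(SimpleGraph.induce {v : V | v ≠ u} G).connectedComponentMk ⟨w, hw⟩, ?_⟩
  intro v hv
  have hvu : v ≠ u := by rintro rfl; exact hu hv
  refine ⟨hvu, ?_⟩
  rcases (mem_closedNbhd' G).mp hv with rfl | h
  · rfl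
  · exact SimpleGraph.ConnectedComponent.sound
      (SimpleGraph.Adj.reachable (by simpa using h.symm))

lemma matchPart_subset {M : Finset (Finset V)} {W : Set V} :
    matchPart M W ⊆ M := Finset.filter_subset _ _

lemma mem_matchPart {M : Finset (Finset V)} {W : Set V} {F : Finset V} :
    F ∈ matchPart M W ↔ F ∈ M ∧ ∀ v ∈ F, v ∈ W := by
  simp [matchPart]

/-- Lemma 3.8(iii): let `M`, `N` be `ν`-matchings of `𝒩(T)` with `N_T[u] ∈ M`.  If
`u ∉ V_N`, then there is a connected component `T_i` of `T \ {u}` such that `N_{T_i}`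
contains a facet containing a neighbor of `u`, `|N_{T_i}| = |M_{T_i}| + 1`, and
`|N_{T_j}| = |M_{T_j}|` for all other components `T_j`. -/
theorem card_matchPart_of_not_mem_vertexSet
    [Fintype V] (G : SimpleGraph V) (hT : G.IsTree) (u : V)
    (ν : ℕ) (hν : ∀ k M, IsNMatching G k M → k ≤ ν)
    (M N : Finset (Finset V)) (hM : IsNMatching G ν M) (hN : IsNMatching G ν N)
    (huM : closedNbhd G u ∈ M) (hu : ∀ F ∈ N, u ∉ F) :
    ∃ c : (SimpleGraph.induce {v : V | v ≠ u} G).ConnectedComponent,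
      (∃ F ∈ matchPart N (compVerts G u c), ∃ v ∈ F, G.Adj u v) ∧
      (matchPart N (compVerts G u c)).card = (matchPart M (compVerts G u c)).card + 1 ∧
      ∀ c' : (SimpleGraph.induce {v : V | v ≠ u} G).ConnectedComponent, c' ≠ c →
        (matchPart N (compVerts G u c')).card = (matchPart M (compVerts G u c')).card := by
  classical
  obtain ⟨hMcard, hMfac, hMdis⟩ := hM
  obtain ⟨hNcard, hNfac, hNdis⟩ := hN
  -- every facet of N lies in a single component
  have hNcomp : ∀ F ∈ N, ∃ c, ∀ v ∈ F, v ∈ compVerts G u c := by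
    intro F hF
    obtain ⟨w, rfl, -⟩ := hNfac F hF
    exact facet_subset_compVerts G (hu _ hF)
  have hMu : ∀ F ∈ M, F ≠ closedNbhd G u → u ∉ F := by
    intro F hF hne hFu
    exact (Finset.disjoint_left.mp (hMdis F hF _ huM hne) hFu)
      (Finset.mem_insert_self _ _)
  have hMcomp : ∀ F ∈ M, F ≠ closedNbhd G u → ∃ c, ∀ v ∈ F, v ∈ compVerts G u c := by
    intro F hF hne
    obtain ⟨w, hFw, -⟩ := hMfac F hF
    subst hFw
    exact facet_subset_compVerts G (hMu _ hF hne)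
  have hNne : ∀ F ∈ N, F.Nonempty := by
    intro F hF; obtain ⟨w, rfl, -⟩ := hNfac F hF; exact closedNbhd_nonempty G w
  have hMne : ∀ F ∈ M, F.Nonempty := by
    intro F hF; obtain ⟨w, rfl, -⟩ := hMfac F hF; exact closedNbhd_nonempty G w
  -- the parts of a matching are pairwise disjoint collections
  have hpart : ∀ (S : Finset (Finset V)), (∀ F ∈ S, F.Nonempty) → ∀ c c', c ≠ c' →
      Disjoint (matchPart S (compVerts G u c)) (matchPart S (compVerts G u c')) := by
    intro S hSne c c' hcc
    rw [Finset.disjoint_left]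
    intro F h1 h2
    rw [mem_matchPart] at h1 h2
    obtain ⟨v, hv⟩ := hSne F h1.1
    exact hcc (compVerts_unique G (h1.2 v hv) (h2.2 v hv))
  have hν1 : 1 ≤ ν := hMcard ▸ Finset.card_pos.mpr ⟨_, huM⟩
  -- sum identities
  have hsumN : ∑ c, (matchPart N (compVerts G u c)).card = ν := by
    have hbi : Finset.univ.biUnion (fun c => matchPart N (compVerts G u c)) = N := by
      apply Finset.Subset.antisymm
      · intro F hF
        obtain ⟨c, -, h⟩ := Finset.mem_biUnion.mp hF
        exact (mem_matchPart.mp h).1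
      · intro F hF
        obtain ⟨c, hc⟩ := hNcomp F hF
        exact Finset.mem_biUnion.mpr ⟨c, Finset.mem_univ _, mem_matchPart.mpr ⟨hF, hc⟩⟩
    rw [← Finset.card_biUnion (fun c _ c' _ h => hpart N hNne c c' h), hbi, hNcard]
  have hsumM : ∑ c, (matchPart M (compVerts G u c)).card = ν - 1 := by
    have hbi : Finset.univ.biUnion (fun c => matchPart M (compVerts G u c))
        = M.erase (closedNbhd G u) := by
      apply Finset.Subset.antisymm
      · intro F hF
        obtain ⟨c, -, h⟩ := Finset.mem_biUnion.mp hF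
        obtain ⟨hFM, hFsub⟩ := mem_matchPart.mp h
        refine Finset.mem_erase.mpr ⟨?_, hFM⟩
        rintro rfl
        exact notMem_compVerts G u c (hFsub u (Finset.mem_insert_self _ _))
      · intro F hF
        obtain ⟨hne, hFM⟩ := Finset.mem_erase.mp hF
        obtain ⟨c, hc⟩ := hMcomp F hFM hne
        exact Finset.mem_biUnion.mpr ⟨c, Finset.mem_univ _, mem_matchPart.mpr ⟨hFM, hc⟩⟩
    rw [← Finset.card_biUnion (fun c _ c' _ h => hpart M hMne c c' h), hbi,
      Finset.card_erase_of_mem huM, hMcard]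
  -- inequality 1 : |M_c| ≤ |N_c| always
  have hEleD : ∀ c, (matchPart M (compVerts G u c)).card ≤
      (matchPart N (compVerts G u c)).card := by
    intro c
    have hsub : (matchPart N (compVerts G u c)) ⊆ N := matchPart_subset
    have hMcsub : (matchPart M (compVerts G u c)) ⊆ M := matchPart_subset
    have hdisj : Disjoint (N \ (matchPart N (compVerts G u c))) (matchPart M (compVerts G u c)) := by
      rw [Finset.disjoint_left]
      intro F h1 h2
      exact (Finset.mem_sdiff.mp h1).2
        (mem_matchPart.mpr ⟨(Finset.mem_sdiff.mp h1).1, (mem_matchPart.mp h2).2⟩)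
    have hcross : ∀ F ∈ N \ (matchPart N (compVerts G u c)), ∀ F' ∈ (matchPart M (compVerts G u c)), Disjoint F F' := by
      intro F hF F' hF'
      obtain ⟨hFN, hFnc⟩ := Finset.mem_sdiff.mp hF
      obtain ⟨c₀, hc₀⟩ := hNcomp F hFN
      have hc₀ne : c₀ ≠ c := by
        rintro rfl
        exact hFnc (mem_matchPart.mpr ⟨hFN, hc₀⟩)
      rw [Finset.disjoint_left]
      intro v hvF hvF'
      exact hc₀ne (compVerts_unique G (hc₀ v hvF) ((mem_matchPart.mp hF').2 v hvF'))
    have hmatch : IsNMatching G ((N \ (matchPart N (compVerts G u c))) ∪ (matchPart M (compVerts G u c))).card ((N \ (matchPart N (compVerts G u c))) ∪ (matchPart M (compVerts G u c))) := by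
      refine ⟨rfl, ?_, ?_⟩
      · intro F hF
        rcases Finset.mem_union.mp hF with h | h
        · exact hNfac F (Finset.mem_sdiff.mp h).1
        · exact hMfac F (hMcsub h)
      · intro F hF F' hF' hne
        rcases Finset.mem_union.mp hF with h | h <;> rcases Finset.mem_union.mp hF' with h' | h'
        · exact hNdis F (Finset.mem_sdiff.mp h).1 F' (Finset.mem_sdiff.mp h').1 hne
        · exact hcross F h F' h'
        · exact (hcross F' h' F h).symm
        · exact hMdis F (hMcsub h) F' (hMcsub h') hne
    have hle := hν _ _ hmatch
    rw [Finset.card_union_of_disjoint hdisj, Finset.card_sdiff_of_subset hsub, hNcard] at hle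
    have hDle : (matchPart N (compVerts G u c)).card ≤ ν := hNcard ▸ Finset.card_le_card hsub
    omega
  -- inequality 2 : if no facet of N_c contains a neighbor of u, then |N_c| ≤ |M_c|
  have hDleE : ∀ c, (¬ ∃ F ∈ matchPart N (compVerts G u c), ∃ v ∈ F, G.Adj u v) →
      (matchPart N (compVerts G u c)).card ≤ (matchPart M (compVerts G u c)).card := by
    intro c hno
    have hsub : (matchPart N (compVerts G u c)) ⊆ N := matchPart_subset
    have hMcsub : (matchPart M (compVerts G u c)) ⊆ M := matchPart_subset
    have hdisj : Disjoint (M \ (matchPart M (compVerts G u c))) (matchPart N (compVerts G u c)) := by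
      rw [Finset.disjoint_left]
      intro F h1 h2
      exact (Finset.mem_sdiff.mp h1).2
        (mem_matchPart.mpr ⟨(Finset.mem_sdiff.mp h1).1, (mem_matchPart.mp h2).2⟩)
    have hcross : ∀ F ∈ M \ (matchPart M (compVerts G u c)), ∀ F' ∈ (matchPart N (compVerts G u c)), Disjoint F F' := by
      intro F hF F' hF'
      obtain ⟨hFM, hFnc⟩ := Finset.mem_sdiff.mp hF
      by_cases hFu : F = closedNbhd G u
      · subst hFu
        rw [Finset.disjoint_left]
        intro v hvF hvF'
        rcases (mem_closedNbhd' G).mp hvF with heq | hadj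
        · exact notMem_compVerts G u c (heq ▸ ((mem_matchPart.mp hF').2 v hvF'))
        · exact hno ⟨F', hF', v, hvF', hadj⟩
      · obtain ⟨c₀, hc₀⟩ := hMcomp F hFM hFu
        have hc₀ne : c₀ ≠ c := by
          rintro rfl
          exact hFnc (mem_matchPart.mpr ⟨hFM, hc₀⟩)
        rw [Finset.disjoint_left]
        intro v hvF hvF'
        exact hc₀ne (compVerts_unique G (hc₀ v hvF) ((mem_matchPart.mp hF').2 v hvF'))
    have hmatch : IsNMatching G ((M \ (matchPart M (compVerts G u c))) ∪ (matchPart N (compVerts G u c))).card ((M \ (matchPart M (compVerts G u c))) ∪ (matchPart N (compVerts G u c))) := by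
      refine ⟨rfl, ?_, ?_⟩
      · intro F hF
        rcases Finset.mem_union.mp hF with h | h
        · exact hMfac F (Finset.mem_sdiff.mp h).1
        · exact hNfac F (hsub h)
      · intro F hF F' hF' hne
        rcases Finset.mem_union.mp hF with h | h <;> rcases Finset.mem_union.mp hF' with h' | h'
        · exact hMdis F (Finset.mem_sdiff.mp h).1 F' (Finset.mem_sdiff.mp h').1 hne
        · exact hcross F h F' h'
        · exact (hcross F' h' F h).symm
        · exact hNdis F (hsub h) F' (hsub h') hne
    have hle := hν _ _ hmatch
    rw [Finset.card_union_of_disjoint hdisj, Finset.card_sdiff_of_subset hMcsub, hMcard] at hle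
    have hEle : (matchPart M (compVerts G u c)).card ≤ ν := hMcard ▸ Finset.card_le_card hMcsub
    omega
  -- final counting
  have hex : ∃ c, (matchPart M (compVerts G u c)).card <
      (matchPart N (compVerts G u c)).card := by
    by_contra hcon
    push_neg at hcon
    have : ∑ c, (matchPart N (compVerts G u c)).card ≤
        ∑ c, (matchPart M (compVerts G u c)).card :=
      Finset.sum_le_sum (fun c _ => hcon c)
    omega
  obtain ⟨c, hc⟩ := hex
  have hsplitN : ∑ c', (matchPart N (compVerts G u c')).card
      = (matchPart N (compVerts G u c)).card
        + ∑ c' ∈ Finset.univ.erase c, (matchPart N (compVerts G u c')).card :=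
    (Finset.add_sum_erase _ _ (Finset.mem_univ c)).symm
  have hsplitM : ∑ c', (matchPart M (compVerts G u c')).card
      = (matchPart M (compVerts G u c)).card
        + ∑ c' ∈ Finset.univ.erase c, (matchPart M (compVerts G u c')).card :=
    (Finset.add_sum_erase _ _ (Finset.mem_univ c)).symm
  have hrest : ∑ c' ∈ Finset.univ.erase c, (matchPart M (compVerts G u c')).card ≤
      ∑ c' ∈ Finset.univ.erase c, (matchPart N (compVerts G u c')).card :=
    Finset.sum_le_sum (fun c' _ => hEleD c')
  refine ⟨c, ?_, by omega, ?_⟩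
  · by_contra hno
    exact absurd (hDleE c hno) (not_le.mpr hc)
  · intro c' hcc
    have hmem : c' ∈ Finset.univ.erase c := Finset.mem_erase.mpr ⟨hcc, Finset.mem_univ _⟩
    have hsplitN' : ∑ x ∈ Finset.univ.erase c, (matchPart N (compVerts G u x)).card
        = (matchPart N (compVerts G u c')).card
          + ∑ x ∈ (Finset.univ.erase c).erase c', (matchPart N (compVerts G u x)).card :=
      (Finset.add_sum_erase _ _ hmem).symm
    have hsplitM' : ∑ x ∈ Finset.univ.erase c, (matchPart M (compVerts G u x)).card
        = (matchPart M (compVerts G u c')).card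
          + ∑ x ∈ (Finset.univ.erase c).erase c', (matchPart M (compVerts G u x)).card :=
      (Finset.add_sum_erase _ _ hmem).symm
    have hrest' : ∑ x ∈ (Finset.univ.erase c).erase c', (matchPart M (compVerts G u x)).card ≤
        ∑ x ∈ (Finset.univ.erase c).erase c', (matchPart N (compVerts G u x)).card :=
      Finset.sum_le_sum (fun x _ => hEleD x)
    have := hEleD c'
    omega
end

section
/- Let T be a tree, let ν be the matching number of 𝒩(T), and let M and N be two ν-matchings of 𝒩(T). Let F ∈ M and suppose that the number of facets G ∈ N with F ∩ G ≠ ∅ is strictly greater than 2. Then there exists a ν-matching W of 𝒩(T), different from both M and N, such that W ⊆ M ∪ N and exactly 2 facets H ∈ W satisfy F ∩ H ≠ ∅. -/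
/-!
Write `F = N[u]` and `M' = M \ {F}`. If `S` is a union of components of the intersection graph
of `M' ∪ N`, exchanging `M' ∩ S` and `N ∩ S` (in either direction) gives matchings again, so by
maximality of `ν` the surplus `|N ∩ S| - |M' ∩ S|` is `0` or `1`. On the components of the facets
of `N` meeting `F` it is positive: otherwise exchanging `N` for `M` there, together with `F`, would
give a matching of size `ν + 1`. Since `T` is acyclic, distinct facets of `N` meeting `F` lie in
distinct components: each contains its own neighbour of `u`, and a chain of intersecting facets
would join two such neighbours in `T - u`. So some such facet `A₁` has a component of surplus one;
exchanging on it and on the component of a second such facet `A₂` gives a `ν`-matching that meets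
`F` exactly in `A₁` and `A₂`.
-/

open scoped Classical
open SimpleGraph Finset MvPolynomial

variable {V : Type*}

theorem SimpleGraph.IsAcyclic.not_reachable_deleteIncidenceSet {G : SimpleGraph V}
    (hG : G.IsAcyclic) {u p q : V} (hp : G.Adj u p) (hq : G.Adj u q) (hpq : p ≠ q) :
    ¬ (G.deleteIncidenceSet u).Reachable p q := by
  intro hreach
  apply isAcyclic_iff_forall_adj_isBridge.mp hG hq
  have hle : G.deleteIncidenceSet u ≤ G.deleteEdges {s(u, q)} := fun a b hab => by
    rw [deleteIncidenceSet_adj] at hab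
    simp [hab.1, hab.2.1, hab.2.2]
  have hup : (G.deleteEdges {s(u, q)}).Adj u p := by simp [hp, hpq, hq.ne]
  exact hup.reachable.trans (hreach.mono hle)

section IntersectionGraph

variable {α : Type*}

def intersectionGraph (X : Finset (Finset α)) : SimpleGraph (Finset α) where
  Adj A B := A ≠ B ∧ A ∈ X ∧ B ∈ X ∧ ¬ Disjoint A B
  symm := ⟨fun _ _ h => ⟨h.1.symm, h.2.2.1, h.2.1, by rw [disjoint_comm]; exact h.2.2.2⟩⟩
  loopless := ⟨fun _ h => h.1 rfl⟩

theorem intersectionGraph_adj {X : Finset (Finset α)} {A B : Finset α} :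
    (intersectionGraph X).Adj A B ↔ A ≠ B ∧ A ∈ X ∧ B ∈ X ∧ ¬ Disjoint A B := .rfl

theorem reachable_of_reachable_intersectionGraph {G : SimpleGraph α} {X : Finset (Finset α)}
    {u : α} (hconn : ∀ C ∈ X, ∀ a ∈ C, ∀ b ∈ C, a ≠ u → b ≠ u → G.Reachable a b)
    (hmeet : ∀ A B, (intersectionGraph X).Adj A B → ∃ v ∈ A, v ∈ B ∧ v ≠ u)
    {A B : Finset α} (hAB : (intersectionGraph X).Reachable A B) (hA : A ∈ X)
    {a b : α} (ha : a ∈ A) (hau : a ≠ u) (hb : b ∈ B) (hbu : b ≠ u) : G.Reachable a b := by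
  rw [reachable_iff_reflTransGen] at hAB
  induction hAB generalizing b with
  | refl => exact hconn A hA a ha b hb hau hbu
  | tail _ hCD ih =>
    obtain ⟨v, hvC, hvD, hvu⟩ := hmeet _ _ hCD
    exact (ih hvC hvu).trans (hconn _ (intersectionGraph_adj.mp hCD).2.2.1 v hvD b hb hvu hbu)

end IntersectionGraph

section ClosedNbhd

variable [Fintype V] {G : SimpleGraph V}

theorem reachable_deleteIncidenceSet_of_mem_closedNbhd {u x a : V} (hxu : x ≠ u)
    (ha : a ∈ closedNbhd G x) (hau : a ≠ u) : (G.deleteIncidenceSet u).Reachable x a := by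
  rcases mem_insert.mp ha with rfl | ha
  · rfl
  · exact Adj.reachable (deleteIncidenceSet_adj.mpr ⟨(mem_neighborFinset G x a).mp ha, hxu, hau⟩)

theorem exists_adj_mem_closedNbhd_of_not_disjoint {u x : V} (hxu : x ≠ u)
    (h : ¬ Disjoint (closedNbhd G u) (closedNbhd G x)) : ∃ p ∈ closedNbhd G x, G.Adj u p := by
  obtain ⟨w, hwu, hwx⟩ := not_disjoint_iff.mp h
  rcases mem_insert.mp hwu with rfl | hw
  · refine ⟨x, mem_insert_self x _, ?_⟩
    rcases mem_insert.mp hwx with rfl | hw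
    · exact absurd rfl hxu
    · exact ((mem_neighborFinset G x w).mp hw).symm
  · exact ⟨w, hwx, (mem_neighborFinset G u w).mp hw⟩

end ClosedNbhd

section Swap

variable {α : Type*} {P Q R S X : Finset (Finset α)}

/-- `S` is a union of components of the intersection graph between `P` and `Q`. -/
def IsSwapSet (P Q S : Finset (Finset α)) : Prop :=
  ∀ A ∈ P, ∀ B ∈ Q, ¬ Disjoint A B → (A ∈ S ↔ B ∈ S)

theorem IsSwapSet.symm (h : IsSwapSet P Q S) : IsSwapSet Q P S :=
  fun B hB A hA hBA => (h A hA B hB (by rwa [disjoint_comm])).symm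

theorem IsSwapSet.pairwiseDisjoint (hS : IsSwapSet P Q S)
    (hP : (P : Set (Finset α)).PairwiseDisjoint id)
    (hQ : (Q : Set (Finset α)).PairwiseDisjoint id) :
    ((P \ S ∪ Q ∩ S : Finset (Finset α)) : Set (Finset α)).PairwiseDisjoint id := by
  intro A hA B hB hAB
  simp only [coe_union, coe_sdiff, coe_inter, Set.mem_union, Set.mem_sdiff, Set.mem_inter_iff,
    mem_coe] at hA hB
  rcases hA with ⟨hAP, hAS⟩ | ⟨hAQ, hAS⟩ <;> rcases hB with ⟨hBP, hBS⟩ | ⟨hBQ, hBS⟩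
  · exact hP hAP hBP hAB
  · by_contra h
    exact hAS ((hS A hAP B hBQ h).mpr hBS)
  · by_contra h
    exact hBS ((hS B hBP A hAQ (by rwa [disjoint_comm])).mpr hAS)
  · exact hQ hAQ hBQ hAB

theorem card_sdiff_union_inter_add_card_inter (P Q S : Finset (Finset α)) :
    #(P \ S ∪ Q ∩ S) + #(P ∩ S) = #P + #(Q ∩ S) := by
  rw [card_union_of_disjoint (sdiff_disjoint.mono_right inter_subset_right),
    ← card_sdiff_add_card_inter P S]
  omega

noncomputable def chainClosure (X R : Finset (Finset α)) : Finset (Finset α) :=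
  X.filter fun B => ∃ A ∈ R, (intersectionGraph X).Reachable A B

theorem chainClosure_subset : chainClosure X R ⊆ X :=
  filter_subset _ _

theorem mem_chainClosure_of_mem {A : Finset α} (hX : A ∈ X) (hR : A ∈ R) :
    A ∈ chainClosure X R :=
  mem_filter.mpr ⟨hX, A, hR, .rfl⟩

theorem isSwapSet_chainClosure (P Q R : Finset (Finset α)) :
    IsSwapSet P Q (chainClosure (P ∪ Q) R) := by
  intro A hA B hB hAB
  rcases eq_or_ne A B with rfl | hne
  · rfl
  have hadj : (intersectionGraph (P ∪ Q)).Adj A B :=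
    ⟨hne, mem_union_left Q hA, mem_union_right P hB, hAB⟩
  simp only [chainClosure, mem_filter, mem_union, hA, hB, true_or, or_true, true_and]
  exact ⟨fun ⟨C, hC, h⟩ => ⟨C, hC, h.trans hadj.reachable⟩,
    fun ⟨C, hC, h⟩ => ⟨C, hC, h.trans hadj.symm.reachable⟩⟩

theorem mem_of_mem_chainClosure {K : Finset (Finset α)}
    (hK : (K : Set (Finset α)).Pairwise fun A B => ¬ (intersectionGraph X).Reachable A B)
    (hRK : R ⊆ K) {B : Finset α} (hBK : B ∈ K) (hB : B ∈ chainClosure X R) : B ∈ R := by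
  obtain ⟨-, A, hA, hAB⟩ := mem_filter.mp hB
  rcases eq_or_ne A B with rfl | hne
  · exact hA
  · exact absurd hAB (hK (hRK hA) hBK hne)

theorem card_inter_chainClosure
    (hR : (R : Set (Finset α)).Pairwise fun A B => ¬ (intersectionGraph X).Reachable A B)
    (Y : Finset (Finset α)) :
    #(Y ∩ chainClosure X R) = ∑ A ∈ R, #(Y ∩ chainClosure X {A}) := by
  have hbiUnion : chainClosure X R = R.biUnion fun A => chainClosure X {A} := by
    ext B
    simp only [chainClosure, mem_filter, mem_singleton, exists_eq_left, mem_biUnion]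
    tauto
  rw [hbiUnion, inter_biUnion, card_biUnion]
  intro A hA A' hA' hne
  refine disjoint_left.mpr fun B hB hB' => hR hA hA' hne ?_
  simp only [chainClosure, mem_inter, mem_filter, mem_singleton, exists_eq_left] at hB hB'
  exact hB.2.2.trans hB'.2.2.symm

end Swap

section Matching

variable [Fintype V] {G : SimpleGraph V} {k m n ν : ℕ} {M N S : Finset (Finset V)}
  {F : Finset V}

theorem IsNMatching.pairwiseDisjoint (hM : IsNMatching G k M) :
    (M : Set (Finset V)).PairwiseDisjoint id :=
  fun A hA B hB => hM.2.2 A hA B hB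

theorem IsNMatching.erase (hM : IsNMatching G k M) (hF : F ∈ M) :
    IsNMatching G (k - 1) (M.erase F) :=
  ⟨by rw [card_erase_of_mem hF, hM.1], fun A hA => hM.2.1 A (mem_of_mem_erase hA),
    fun A hA B hB => hM.2.2 A (mem_of_mem_erase hA) B (mem_of_mem_erase hB)⟩

theorem IsNMatching.card_filter_meets_le_one (hM : IsNMatching G k M) (hF : F ∈ M) :
    #(M.filter fun H => (F ∩ H).Nonempty) ≤ 1 := by
  refine card_le_one_iff_subset_singleton.mpr ⟨F, fun H hH => mem_singleton.mpr ?_⟩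
  obtain ⟨hHM, hFH⟩ := mem_filter.mp hH
  by_contra hne
  exact not_disjoint_iff_nonempty_inter.mpr hFH (hM.2.2 F hF H hHM (Ne.symm hne))

theorem IsNMatching.swap (hM : IsNMatching G m M) (hN : IsNMatching G n N)
    (hS : IsSwapSet M N S) : IsNMatching G #(M \ S ∪ N ∩ S) (M \ S ∪ N ∩ S) := by
  refine ⟨rfl, fun A hA => ?_, fun A hA B hB =>
    hS.pairwiseDisjoint hM.pairwiseDisjoint hN.pairwiseDisjoint hA hB⟩
  rcases mem_union.mp hA with hA | hA
  exacts [hM.2.1 A (mem_sdiff.mp hA).1, hN.2.1 A (mem_inter.mp hA).1]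

theorem IsNMatching.add_card_inter_le (hν : ∀ k M, IsNMatching G k M → k ≤ ν)
    (hM : IsNMatching G m M) (hN : IsNMatching G n N) (hS : IsSwapSet M N S) :
    m + #(N ∩ S) ≤ ν + #(M ∩ S) := by
  have hswap := hν _ _ (hM.swap hN hS)
  have hcard := card_sdiff_union_inter_add_card_inter M N S
  have hm := hM.1
  omega

end Matching

section Tree

variable [Fintype V] {G : SimpleGraph V} {m n : ℕ} {M N : Finset (Finset V)} {F : Finset V}

theorem not_reachable_intersectionGraph_of_meets (hG : G.IsAcyclic)
    (hM : IsNMatching G m M) (hN : IsNMatching G n N) (hF : F ∈ M) (hFN : F ∉ N) :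
    ((N.filter fun B => (F ∩ B).Nonempty : Finset (Finset V)) : Set (Finset V)).Pairwise
      fun A B => ¬ (intersectionGraph (M.erase F ∪ N)).Reachable A B := by
  obtain ⟨u, rfl, -⟩ := hM.2.1 _ hF
  set X := M.erase (closedNbhd G u) ∪ N
  have hcenter : ∀ C ∈ X, ∃ x ≠ u, C = closedNbhd G x := by
    intro C hC
    have hCF : C ≠ closedNbhd G u := by
      rintro rfl
      rcases mem_union.mp hC with h | h
      exacts [(mem_erase.mp h).1 rfl, hFN h]
    obtain ⟨x, rfl, -⟩ := (mem_union.mp hC).elim (fun h => hM.2.1 C (mem_of_mem_erase h))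
      (hN.2.1 C)
    exact ⟨x, fun hxu => hCF (hxu ▸ rfl), rfl⟩
  have hconn : ∀ C ∈ X, ∀ a ∈ C, ∀ b ∈ C, a ≠ u → b ≠ u →
      (G.deleteIncidenceSet u).Reachable a b := by
    intro C hC a ha b hb hau hbu
    obtain ⟨x, hxu, rfl⟩ := hcenter C hC
    exact (reachable_deleteIncidenceSet_of_mem_closedNbhd hxu ha hau).symm.trans
      (reachable_deleteIncidenceSet_of_mem_closedNbhd hxu hb hbu)
  -- Only facets of `N` contain `u`, and those are pairwise disjoint.
  have hmeet : ∀ A B, (intersectionGraph X).Adj A B → ∃ v ∈ A, v ∈ B ∧ v ≠ u := by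
    rintro A B ⟨hAB, hA, hB, hnd⟩
    obtain ⟨v, hvA, hvB⟩ := not_disjoint_iff.mp hnd
    refine ⟨v, hvA, hvB, ?_⟩
    rintro rfl
    have hmemN : ∀ C ∈ X, v ∈ C → C ∈ N := fun C hC hvC =>
      (mem_union.mp hC).resolve_left fun h => not_disjoint_iff.mpr
        ⟨v, mem_insert_self v _, hvC⟩ (hM.2.2 _ hF C (mem_of_mem_erase h) (mem_erase.mp h).1.symm)
    exact hnd (hN.2.2 A (hmemN A hA hvA) B (hmemN B hB hvB) hAB)
  intro A hA B hB hAB hreach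
  simp only [coe_filter, Set.mem_ofPred_eq, ← not_disjoint_iff_nonempty_inter] at hA hB
  obtain ⟨x, hxu, rfl⟩ := hcenter A (mem_union_right _ hA.1)
  obtain ⟨y, hyu, rfl⟩ := hcenter _ (mem_union_right _ hB.1)
  obtain ⟨p, hpA, hup⟩ := exists_adj_mem_closedNbhd_of_not_disjoint hxu hA.2
  obtain ⟨q, hqB, huq⟩ := exists_adj_mem_closedNbhd_of_not_disjoint hyu hB.2
  have hpq : p ≠ q := by
    rintro rfl
    exact not_disjoint_iff.mpr ⟨p, hpA, hqB⟩ (hN.2.2 _ hA.1 _ hB.1 hAB)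
  exact hG.not_reachable_deleteIncidenceSet hup huq hpq
    (reachable_of_reachable_intersectionGraph hconn hmeet hreach (mem_union_right _ hA.1)
      hpA hup.ne.symm hqB huq.ne.symm)

end Tree

section Main

variable [Fintype V] {G : SimpleGraph V} {m ν : ℕ} {M N R : Finset (Finset V)} {F : Finset V}

theorem card_erase_inter_chainClosure_lt (hν : ∀ k M, IsNMatching G k M → k ≤ ν)
    (hM : IsNMatching G ν M) (hN : IsNMatching G ν N) (hF : F ∈ M) (hFN : F ∉ N) :
    #(M.erase F ∩ chainClosure (M.erase F ∪ N) (N.filter fun B => (F ∩ B).Nonempty)) <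
      #(N ∩ chainClosure (M.erase F ∪ N) (N.filter fun B => (F ∩ B).Nonempty)) := by
  set C := chainClosure (M.erase F ∪ N) (N.filter fun B => (F ∩ B).Nonempty)
  have hFC : F ∉ C := fun h => by simpa [hFN] using chainClosure_subset h
  -- Adding `F` to `C` keeps it a swap set, because every facet of `N` meeting `F` lies in `C`.
  have hS : IsSwapSet M N (insert F C) := by
    intro A hA B hB hAB
    have hBF : B ≠ F := ne_of_mem_of_not_mem hB hFN
    rcases eq_or_ne A F with rfl | hAF
    · simp only [mem_insert, true_or, hBF, false_or, true_iff]
      exact mem_chainClosure_of_mem (mem_union_right _ hB)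
        (mem_filter.mpr ⟨hB, not_disjoint_iff_nonempty_inter.mp hAB⟩)
    · simp only [mem_insert, hAF, hBF, false_or]
      exact isSwapSet_chainClosure _ _ _ A (mem_erase.mpr ⟨hAF, hA⟩) B hB hAB
  have hle := hN.add_card_inter_le hν hM hS.symm
  have hMC : M.erase F ∩ C = M ∩ C := by
    rw [erase_inter, erase_eq_of_notMem fun h => hFC (mem_inter.mp h).2]
  rw [inter_insert_of_mem hF, inter_insert_of_notMem hFN,
    card_insert_of_notMem fun h => hFC (mem_inter.mp h).2, ← hMC] at hle
  omega

theorem filter_meets_swap_chainClosure (hM : IsNMatching G m M) (hF : F ∈ M)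
    (hsep : ((N.filter fun B => (F ∩ B).Nonempty : Finset (Finset V)) : Set (Finset V)).Pairwise
      fun A B => ¬ (intersectionGraph (M.erase F ∪ N)).Reachable A B)
    (hR : R ⊆ N.filter fun B => (F ∩ B).Nonempty) :
    (M.erase F \ chainClosure (M.erase F ∪ N) R ∪ N ∩ chainClosure (M.erase F ∪ N) R).filter
      (fun H => (F ∩ H).Nonempty) = R := by
  ext H
  simp only [mem_filter, mem_union, mem_sdiff, mem_inter]
  constructor
  · rintro ⟨⟨hHM, -⟩ | ⟨hHN, hHC⟩, hFH⟩
    · exact absurd (hM.2.2 F hF H (mem_of_mem_erase hHM) (ne_of_mem_erase hHM).symm)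
        (not_disjoint_iff_nonempty_inter.mpr hFH)
    · exact mem_of_mem_chainClosure hsep hR (mem_filter.mpr ⟨hHN, hFH⟩) hHC
  · intro hHR
    obtain ⟨hHN, hFH⟩ := mem_filter.mp (hR hHR)
    exact ⟨.inr ⟨hHN, mem_chainClosure_of_mem (mem_union_right _ hHN) hHR⟩, hFH⟩

theorem card_swap_chainClosure_pair_eq (hν : ∀ k M, IsNMatching G k M → k ≤ ν)
    (hM : IsNMatching G ν M) (hN : IsNMatching G ν N) (hF : F ∈ M) {A₁ A₂ : Finset V}
    (hsep : (({A₁, A₂} : Finset (Finset V)) : Set (Finset V)).Pairwise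
      fun A B => ¬ (intersectionGraph (M.erase F ∪ N)).Reachable A B)
    (hne : A₁ ≠ A₂)
    (hlt : #(M.erase F ∩ chainClosure (M.erase F ∪ N) {A₁}) <
      #(N ∩ chainClosure (M.erase F ∪ N) {A₁})) :
    #(M.erase F \ chainClosure (M.erase F ∪ N) {A₁, A₂} ∪
      N ∩ chainClosure (M.erase F ∪ N) {A₁, A₂}) = ν := by
  have hM' := hM.erase hF
  have hνpos : 0 < ν := hM.1 ▸ card_pos.mpr ⟨F, hF⟩
  have hbound : ∀ R, #(N ∩ chainClosure (M.erase F ∪ N) R) ≤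
        #(M.erase F ∩ chainClosure (M.erase F ∪ N) R) + 1 ∧
      #(M.erase F ∩ chainClosure (M.erase F ∪ N) R) ≤ #(N ∩ chainClosure (M.erase F ∪ N) R) := by
    intro R
    have hS := isSwapSet_chainClosure (M.erase F) N R
    have h₁ := hM'.add_card_inter_le hν hN hS
    have h₂ := hN.add_card_inter_le hν hM' hS.symm
    omega
  have hsum := card_inter_chainClosure hsep
  simp only [sum_pair hne] at hsum
  have hN₁₂ := hsum N
  have hM₁₂ := hsum (M.erase F)
  have h₂ := hbound {A₂}
  have h₁₂ := hbound {A₁, A₂}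
  have hcard := card_sdiff_union_inter_add_card_inter (M.erase F) N
    (chainClosure (M.erase F ∪ N) {A₁, A₂})
  have hM'card := hM'.1
  omega

end Main

/-- Lemma 3.9: let `M`, `N` be `ν`-matchings of `𝒩(T)` for a tree `T` and `F ∈ M` a facet
meeting more than two facets of `N`.  Then there is a `ν`-matching `W ⊆ M ∪ N`,
different from both `M` and `N`, such that exactly two facets of `W` meet `F`. -/
theorem exists_matching_two_intersections
    [Fintype V] (G : SimpleGraph V) (hT : G.IsTree)
    (ν : ℕ) (hν : ∀ k M, IsNMatching G k M → k ≤ ν)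
    (M N : Finset (Finset V)) (hM : IsNMatching G ν M) (hN : IsNMatching G ν N)
    (F : Finset V) (hF : F ∈ M)
    (hcard : 2 < (N.filter (fun G' => (F ∩ G').Nonempty)).card) :
    ∃ W : Finset (Finset V), IsNMatching G ν W ∧ W ≠ M ∧ W ≠ N ∧ W ⊆ M ∪ N ∧
      (W.filter (fun H => (F ∩ H).Nonempty)).card = 2 := by
  have hFN : F ∉ N := fun h => by have := hN.card_filter_meets_le_one h; omega
  have hsep := not_reachable_intersectionGraph_of_meets hT.isAcyclic hM hN hF hFN
  obtain ⟨A₁, hA₁, hlt⟩ : ∃ A ∈ N.filter fun B => (F ∩ B).Nonempty,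
      #(M.erase F ∩ chainClosure (M.erase F ∪ N) {A}) <
        #(N ∩ chainClosure (M.erase F ∪ N) {A}) := by
    refine exists_lt_of_sum_lt ?_
    rw [← card_inter_chainClosure hsep, ← card_inter_chainClosure hsep]
    exact card_erase_inter_chainClosure_lt hν hM hN hF hFN
  obtain ⟨A₂, hA₂, hne⟩ := exists_mem_ne (one_lt_two.trans hcard) A₁
  have hR : {A₁, A₂} ⊆ N.filter fun B => (F ∩ B).Nonempty :=
    insert_subset hA₁ (singleton_subset_iff.mpr hA₂)
  have hWR := filter_meets_swap_chainClosure hM hF hsep hR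
  refine ⟨_, ⟨card_swap_chainClosure_pair_eq hν hM hN hF (hsep.mono (coe_subset.mpr hR))
      hne.symm hlt, ((hM.erase hF).swap hN (isSwapSet_chainClosure _ _ _)).2⟩,
    fun hWM => ?_, fun hWN => ?_, ?_, by rw [hWR, card_pair hne.symm]⟩
  · have := hM.card_filter_meets_le_one hF
    rw [← hWM, hWR, card_pair hne.symm] at this
    omega
  · rw [← hWN, hWR, card_pair hne.symm] at hcard
    omega
  · exact union_subset (sdiff_subset.trans ((erase_subset F M).trans subset_union_left))
      (inter_subset_left.trans subset_union_right)
end
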